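/- arXiv:2209.15232 — 2 statements merged into one kernel-verified Lean document; each statement's English description precedes it below -/
import Mathlib

section
/- (Comparison principle I.) Let Ω ⊂ ℝⁿ be a bounded domain and suppose (A1)–(A2) hold. Let f₁, f₂ ∈ C(closure of Ω) with f₁ > f₂ everywhere, let v ∈ C(closure of Ω) be a viscosity subsolution of Φ(y,|Du|)F(D²u) = f₁(y) in Ω, and let w ∈ C(closure of Ω) ∩ C²(Ω) be a viscosity supersolution of Φ(y,|Du|)F(D²u) = f₂(y) in Ω. If v ≤ w on ∂Ω, then v ≤ w in Ω. -/
/-!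
At an interior maximum point `x₀` of `v - w`, the function `w`, cut off away from `x₀`, is an
admissible test function both for the subsolution `v` (touching from above) and for the
supersolution `w` itself (touching from below). Both viscosity inequalities then hold for the same
gradient and Hessian, giving `f₁ x₀ ≤ Φ x₀ ‖p‖ * F M ≤ f₂ x₀`, against `f₂ < f₁`.
-/

open Metric Set MeasureTheory
open scoped RealInnerProductSpace NNReal

noncomputable section

abbrev En (n : ℕ) : Type := EuclideanSpace ℝ (Fin n)

/-- The Hessian matrix of `u` at `x`, via the second iterated Fréchet derivative. -/
def Hess {n : ℕ} (u : En n → ℝ) (x : En n) : Matrix (Fin n) (Fin n) ℝ :=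
  fun i j => iteratedFDeriv ℝ 2 u x ![EuclideanSpace.single i 1, EuclideanSpace.single j 1]

/-- (A1): `F` is uniformly `(lam, Lam)`-elliptic. -/
def UniformlyElliptic (n : ℕ) (lam Lam : ℝ) (F : Matrix (Fin n) (Fin n) ℝ → ℝ) : Prop :=
  ∀ M N : Matrix (Fin n) (Fin n) ℝ, M.IsSymm → N.IsSymm → N.PosSemidef →
    lam * N.trace ≤ F (M + N) - F M ∧ F (M + N) - F M ≤ Lam * N.trace

/-- Viscosity subsolution of `G (x, u x, Du, D²u) = 0` (in the sense `G ≥ 0` at test points). -/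
def ViscSubOn {n : ℕ} (U : Set (En n))
    (G : En n → ℝ → En n → Matrix (Fin n) (Fin n) ℝ → ℝ) (u : En n → ℝ) : Prop :=
  ∀ φ : En n → ℝ, ContDiff ℝ 2 φ → ∀ x₀ ∈ U,
    IsLocalMaxOn (fun y => u y - φ y) U x₀ →
    0 ≤ G x₀ (u x₀) (gradient φ x₀) (Hess φ x₀)

def ViscSupOn {n : ℕ} (U : Set (En n))
    (G : En n → ℝ → En n → Matrix (Fin n) (Fin n) ℝ → ℝ) (u : En n → ℝ) : Prop :=
  ∀ φ : En n → ℝ, ContDiff ℝ 2 φ → ∀ x₀ ∈ U,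
    IsLocalMinOn (fun y => u y - φ y) U x₀ →
    G x₀ (u x₀) (gradient φ x₀) (Hess φ x₀) ≤ 0

def ViscSolOn {n : ℕ} (U : Set (En n))
    (G : En n → ℝ → En n → Matrix (Fin n) (Fin n) ℝ → ℝ) (u : En n → ℝ) : Prop :=
  ViscSubOn U G u ∧ ViscSupOn U G u

/-- (A2): the structure conditions on the map `Φ`. -/
structure PhiStruct {n : ℕ} (Ω : Set (En n)) (Φ : En n → ℝ → ℝ)
    (iP sP L ν₀ ν₁ : ℝ) : Prop where
  iP_gt : (-1 : ℝ) < iP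
  iP_le_sP : iP ≤ sP
  one_le_L : 1 ≤ L
  ν₀_pos : 0 < ν₀
  ν₀_le_ν₁ : ν₀ ≤ ν₁
  nonneg : ∀ x ∈ Ω, ∀ t : ℝ, 0 ≤ t → 0 ≤ Φ x t
  cont : ContinuousOn (fun p : En n × ℝ => Φ p.1 p.2) (Ω ×ˢ Ici (0 : ℝ))
  almost_mono : ∀ x ∈ Ω, ∀ t₁ t₂ : ℝ, 0 < t₁ → t₁ ≤ t₂ →
    Φ x t₁ / t₁ ^ iP ≤ L * (Φ x t₂ / t₂ ^ iP)
  almost_anti : ∀ x ∈ Ω, ∀ t₁ t₂ : ℝ, 0 < t₁ → t₁ ≤ t₂ →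
    Φ x t₂ / t₂ ^ sP ≤ L * (Φ x t₁ / t₁ ^ sP)
  lb : ∀ x ∈ Ω, ν₀ ≤ Φ x 1
  ub : ∀ x ∈ Ω, Φ x 1 ≤ ν₁

/-- last coordinate `y_n`. -/
def yLast {m : ℕ} (y : En (m + 1)) : ℝ := y (Fin.last m)

/-- the first `n-1` coordinates `y'`. -/
def yPrime {m : ℕ} (y : En (m + 1)) : En m := WithLp.toLp 2 (fun i : Fin m => y i.castSucc)

/-- `B ∩ {y_n > φ(y')}`. -/
def flatDom {m : ℕ} (φb : En m → ℝ) (B : Set (En (m + 1))) : Set (En (m + 1)) :=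
  {y ∈ B | φb (yPrime y) < yLast y}

/-- `B ∩ {y_n = φ(y')}`. -/
def flatBdy {m : ℕ} (φb : En m → ℝ) (B : Set (En (m + 1))) : Set (En (m + 1)) :=
  {y ∈ B | yLast y = φb (yPrime y)}

/-- A bounded `C^{1,1}` domain: near each boundary point, after a rigid motion,
`Ω` is the region above the graph of a `C^{1,1}` function. -/
def IsC11Domain {m : ℕ} (Ω : Set (En (m + 1))) : Prop :=
  IsOpen Ω ∧ Bornology.IsBounded Ω ∧ IsConnected Ω ∧
  ∀ z ∈ frontier Ω, ∃ (R : En (m + 1) ≃ᵃⁱ[ℝ] En (m + 1)) (ρ : ℝ)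
      (φb : En m → ℝ) (Kφ : ℝ≥0), 0 < ρ ∧ ContDiff ℝ 1 φb ∧
      LipschitzWith Kφ (fderiv ℝ φb) ∧
      ∀ y ∈ ball z ρ, (y ∈ Ω ↔ φb (yPrime (R y)) < yLast (R y))

/-- `abar` is a Krylov–Safonov exponent for `(lam, Lam)`-elliptic operators in dimension `m+1`. -/
def KSExponent (m : ℕ) (lam Lam abar : ℝ) : Prop :=
  0 < abar ∧ abar < 1 ∧
  ∀ F : Matrix (Fin (m + 1)) (Fin (m + 1)) ℝ → ℝ, Continuous F →
    UniformlyElliptic (m + 1) lam Lam F → F 0 = 0 →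
    ∀ u : En (m + 1) → ℝ, ContinuousOn u (ball 0 1) →
      ViscSolOn (ball 0 1) (fun _ _ _ M => F M) u →
      ∃ (Du : En (m + 1) → En (m + 1)) (C : ℝ),
        (∀ x ∈ ball (0 : En (m + 1)) (1 / 2), HasGradientAt u (Du x) x) ∧
        ∀ x ∈ ball (0 : En (m + 1)) (1 / 2), ∀ y ∈ ball (0 : En (m + 1)) (1 / 2),
          ‖Du x - Du y‖ ≤ C * ‖x - y‖ ^ abar

/-- `L^p` norm of `h` over the set `s`. -/
def LnNorm {n : ℕ} (s : Set (En n)) (h : En n → ℝ) (p : ℝ) : ℝ :=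
  (∫ x in s, |h x| ^ p) ^ (1 / p)

/-- upper contact set `Γ⁺(v, Ω)`. -/
def UpperContact {n : ℕ} (Ω : Set (En n)) (v : En n → ℝ) : Set (En n) :=
  {x ∈ Ω | ∃ p : En n, ∀ y ∈ Ω, v y ≤ v x + ⟪p, y - x⟫}

open Filter Topology

theorem exists_contDiff_eventuallyEq_of_contDiffOn {E : Type*} [NormedAddCommGroup E]
    [NormedSpace ℝ E] [HasContDiffBump E] {k : ℕ∞} {U : Set E} {w : E → ℝ} {x : E}
    (hU : IsOpen U) (hx : x ∈ U) (hw : ContDiffOn ℝ k w U) :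
    ∃ φ : E → ℝ, ContDiff ℝ k φ ∧ φ =ᶠ[𝓝 x] w := by
  obtain ⟨ε, hε, hεU⟩ := nhds_basis_closedBall.mem_iff.1 (hU.mem_nhds hx)
  let f : ContDiffBump x := ⟨ε / 2, ε, half_pos hε, half_lt_self hε⟩
  have hcover : U ∪ (tsupport f)ᶜ = univ := by
    refine eq_univ_of_forall fun y => ?_
    by_cases hy : y ∈ tsupport f
    exacts [Or.inl (hεU (f.tsupport_eq ▸ hy)), Or.inr hy]
  refine ⟨fun y => f y * w y, ?_, ?_⟩
  · refine contDiff_of_contDiffOn_union_of_isOpen (f.contDiff.contDiffOn.mul hw)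
      (contDiffOn_const (c := (0 : ℝ)).congr fun y hy => ?_) hcover hU
      (isClosed_tsupport f).isOpen_compl
    simp [image_eq_zero_of_notMem_tsupport hy]
  · filter_upwards [f.eventuallyEq_one] with y hy
    simp [hy]

theorem exists_mem_isMaxOn_closure_of_nonpos_frontier {X : Type*} [PseudoMetricSpace X]
    [ProperSpace X] {Ω : Set X} (hΩo : IsOpen Ω) (hΩb : Bornology.IsBounded Ω) {h : X → ℝ}
    (hh : ContinuousOn h (closure Ω)) (hfr : ∀ y ∈ frontier Ω, h y ≤ 0) {x : X} (hx : x ∈ Ω)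
    (hpos : 0 < h x) : ∃ x₀ ∈ Ω, IsMaxOn h (closure Ω) x₀ := by
  obtain ⟨x₀, hx₀, hmax⟩ :=
    hΩb.isCompact_closure.exists_isMaxOn ⟨x, subset_closure hx⟩ hh
  refine ⟨x₀, ?_, hmax⟩
  by_contra hx₀Ω
  have hx₀fr : x₀ ∈ frontier Ω := by
    rw [frontier, hΩo.interior_eq]
    exact ⟨hx₀, hx₀Ω⟩
  have hle : h x ≤ h x₀ := hmax (subset_closure hx)
  linarith [hfr x₀ hx₀fr]

theorem ViscSubOn.exists_jet_of_isLocalMaxOn_sub {n : ℕ} {U : Set (En n)}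
    {G₁ G₂ : En n → ℝ → En n → Matrix (Fin n) (Fin n) ℝ → ℝ} {v w : En n → ℝ}
    (hv : ViscSubOn U G₁ v) (hw : ViscSupOn U G₂ w) (hU : IsOpen U) (hw2 : ContDiffOn ℝ 2 w U)
    {x₀ : En n} (hx₀ : x₀ ∈ U) (hmax : IsLocalMaxOn (fun y => v y - w y) U x₀) :
    ∃ p M, 0 ≤ G₁ x₀ (v x₀) p M ∧ G₂ x₀ (w x₀) p M ≤ 0 := by
  obtain ⟨φ, hφ, hφw⟩ := exists_contDiff_eventuallyEq_of_contDiffOn hU hx₀ hw2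
  have hφw' : φ =ᶠ[𝓝[U] x₀] w := nhdsWithin_le_nhds hφw
  have hvφ : IsLocalMaxOn (fun y => v y - φ y) U x₀ :=
    hmax.congr (hφw'.mono fun y hy => by simp only [hy]) hx₀
  have hwφ : IsLocalMinOn (fun y => w y - φ y) U x₀ :=
    (isLocalMinOn_const (b := (0 : ℝ))).congr (hφw'.mono fun y hy => by simp [hy]) hx₀
  exact ⟨_, _, hv φ hφ x₀ hx₀ hvφ, hw φ hφ x₀ hx₀ hwφ⟩

theorem comparison_principle_I_general (m : ℕ)
    (Ω : Set (En (m + 1))) (hΩo : IsOpen Ω)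
    (hΩb : Bornology.IsBounded Ω)
    (F : Matrix (Fin (m + 1)) (Fin (m + 1)) ℝ → ℝ)
    (Φ : En (m + 1) → ℝ → ℝ)
    (f₁ f₂ : En (m + 1) → ℝ)
    (hff : ∀ x ∈ closure Ω, f₂ x < f₁ x)
    (v w : En (m + 1) → ℝ)
    (hv : ContinuousOn v (closure Ω)) (hw : ContinuousOn w (closure Ω))
    (hw2 : ContDiffOn ℝ 2 w Ω)
    (hvsub : ViscSubOn Ω (fun x _ p M => Φ x ‖p‖ * F M - f₁ x) v)
    (hwsup : ViscSupOn Ω (fun x _ p M => Φ x ‖p‖ * F M - f₂ x) w)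
    (hbdry : ∀ x ∈ frontier Ω, v x ≤ w x) :
    ∀ x ∈ Ω, v x ≤ w x := by
  intro x hx
  by_contra! hlt
  obtain ⟨x₀, hx₀, hmax⟩ := exists_mem_isMaxOn_closure_of_nonpos_frontier hΩo hΩb (hv.sub hw)
    (fun y hy => sub_nonpos.2 (hbdry y hy)) hx (sub_pos.2 hlt)
  obtain ⟨p, M, hsub, hsup⟩ := hvsub.exists_jet_of_isLocalMaxOn_sub hwsup hΩo hw2 hx₀
    (hmax.on_subset subset_closure).localize
  linarith [hff x₀ (subset_closure hx₀)]

/-- Comparison principle I (Lemma 4.2). -/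
theorem comparison_principle_I (m : ℕ) (hm : 1 ≤ m)
    (lam Lam iP sP L ν₀ ν₁ : ℝ) (hlam : 0 < lam) (hlL : lam ≤ Lam)
    (Ω : Set (En (m + 1))) (hΩo : IsOpen Ω) (hΩc : IsConnected Ω)
    (hΩb : Bornology.IsBounded Ω)
    (F : Matrix (Fin (m + 1)) (Fin (m + 1)) ℝ → ℝ)
    (hFc : Continuous F) (hFe : UniformlyElliptic (m + 1) lam Lam F) (hF0 : F 0 = 0)
    (Φ : En (m + 1) → ℝ → ℝ) (hΦ : PhiStruct Ω Φ iP sP L ν₀ ν₁)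
    (f₁ f₂ : En (m + 1) → ℝ)
    (hf₁ : ContinuousOn f₁ (closure Ω)) (hf₂ : ContinuousOn f₂ (closure Ω))
    (hff : ∀ x ∈ closure Ω, f₂ x < f₁ x)
    (v w : En (m + 1) → ℝ)
    (hv : ContinuousOn v (closure Ω)) (hw : ContinuousOn w (closure Ω))
    (hw2 : ContDiffOn ℝ 2 w Ω)
    (hvsub : ViscSubOn Ω (fun x _ p M => Φ x ‖p‖ * F M - f₁ x) v)
    (hwsup : ViscSupOn Ω (fun x _ p M => Φ x ‖p‖ * F M - f₂ x) w)
    (hbdry : ∀ x ∈ frontier Ω, v x ≤ w x) :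
    ∀ x ∈ Ω, v x ≤ w x :=
  comparison_principle_I_general m Ω hΩo hΩb F Φ f₁ f₂ hff v w hv hw hw2 hvsub hwsup hbdry
end
end

section
/- For all n×n real symmetric positive semidefinite matrices A and B, det(A)·det(B) ≤ (tr(AB)/n)^n. -/
/-!
With `S = √A`, the matrix `S * B * S` is positive semidefinite, has determinant `det A * det B`
and trace `tr (A * B)`. AM-GM applied to its (nonnegative) eigenvalues bounds the product of
the eigenvalues, its determinant, by the `n`-th power of their mean, `tr / n`.
-/

open Finset Matrix

theorem Real.prod_le_sum_div_card_pow {ι : Type*} (s : Finset ι) (z : ι → ℝ)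
    (hz : ∀ i ∈ s, 0 ≤ z i) : ∏ i ∈ s, z i ≤ ((∑ i ∈ s, z i) / #s) ^ #s := by
  rcases s.eq_empty_or_nonempty with rfl | hs
  · simp
  have hcard : (0 : ℝ) < #s := by exact_mod_cast hs.card_pos
  have amgm := Real.geom_mean_le_arith_mean s (fun _ ↦ 1) z (fun _ _ ↦ zero_le_one)
    (by simpa using hcard) hz
  simp only [Real.rpow_one, one_mul, sum_const, nsmul_eq_mul, mul_one] at amgm
  calc ∏ i ∈ s, z i = ((∏ i ∈ s, z i) ^ (#s : ℝ)⁻¹) ^ #s :=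
        (Real.rpow_inv_natCast_pow (prod_nonneg hz) (Nat.pos_iff_ne_zero.mp hs.card_pos)).symm
    _ ≤ ((∑ i ∈ s, z i) / #s) ^ #s := by gcongr; exact Real.rpow_nonneg (prod_nonneg hz) _

theorem Matrix.PosSemidef.det_le_trace_div_card_pow {ι : Type*} [Fintype ι] [DecidableEq ι]
    {C : Matrix ι ι ℝ} (hC : C.PosSemidef) :
    C.det ≤ (C.trace / Fintype.card ι) ^ Fintype.card ι := by
  have hdet : C.det = ∏ i, hC.isHermitian.eigenvalues i := by
    simpa using hC.isHermitian.det_eq_prod_eigenvalues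
  have htrace : C.trace = ∑ i, hC.isHermitian.eigenvalues i := by
    simpa using hC.isHermitian.trace_eq_sum_eigenvalues
  rw [hdet, htrace]
  exact Real.prod_le_sum_div_card_pow _ _ fun i _ ↦ hC.eigenvalues_nonneg i

open scoped MatrixOrder in
theorem Matrix.PosSemidef.det_mul_det_le_trace_mul_div_card_pow {ι : Type*} [Fintype ι]
    [DecidableEq ι] {A B : Matrix ι ι ℝ} (hA : A.PosSemidef) (hB : B.PosSemidef) :
    A.det * B.det ≤ ((A * B).trace / Fintype.card ι) ^ Fintype.card ι := by
  set S := CFC.sqrt A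
  have hSS : S * S = A := CFC.sqrt_mul_sqrt_self A hA.nonneg
  have hS : S.IsHermitian := (CFC.sqrt_nonneg A).posSemidef.isHermitian
  have hSBS : (S * B * S).PosSemidef := by
    simpa only [hS.eq] using hB.mul_mul_conjTranspose_same S
  calc A.det * B.det = (S * B * S).det := by
        rw [← hSS, det_mul, det_mul, det_mul]; ring
    _ ≤ ((S * B * S).trace / Fintype.card ι) ^ Fintype.card ι := hSBS.det_le_trace_div_card_pow
    _ = ((A * B).trace / Fintype.card ι) ^ Fintype.card ι := by rw [trace_mul_cycle, hSS]

theorem det_mul_det_le_trace_mul_div_pow_general (n : ℕ)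
    (A B : Matrix (Fin n) (Fin n) ℝ) (hA : A.PosSemidef) (hB : B.PosSemidef) :
    A.det * B.det ≤ ((A * B).trace / (n : ℝ)) ^ n := by
  simpa only [Fintype.card_fin] using hA.det_mul_det_le_trace_mul_div_card_pow hB

/-- for `n × n` real symmetric positive semidefinite matrices `A` and `B`,
`det A * det B ≤ (tr (A * B) / n) ^ n`. -/
theorem det_mul_det_le_trace_mul_div_pow (n : ℕ) (hn : 1 ≤ n)
    (A B : Matrix (Fin n) (Fin n) ℝ) (hA : A.PosSemidef) (hB : B.PosSemidef) :
    A.det * B.det ≤ ((A * B).trace / (n : ℝ)) ^ n :=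
  det_mul_det_le_trace_mul_div_pow_general n A B hA hB
end
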